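/- arXiv:2409.07655 — 6 statements merged into one kernel-verified Lean document; each statement's English description precedes it below -/
import Mathlib

section
/- Fix an integer n ≥ 1 and positive reals a_1,…,a_n, b_1,…,b_n. For each i let R_i = {(w·a_i, (1−w)·b_i) : w ∈ [0,1]} ⊂ ℝ². Then the optimal value of the direct-control demand-response problem, namely the minimum of max(Σ_{i=1}^n q_{i,1}, Σ_{i=1}^n q_{i,2}) over all choices q_i = (q_{i,1}, q_{i,2}) ∈ R_i, equals max over z ∈ [0,1] of L_n(z), where L_n(z) = Σ_{i=1}^n [ (1−z)·b_i·𝟙((1−z)b_i < z a_i) + z·a_i·𝟙((1−z)b_i ≥ z a_i) ]. -/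
open Finset

/-- The summand of `L_n` is just a `min`. -/
lemma dcw_min_eq_term (t p q : ℝ) :
    (1 - t) * q * (if (1 - t) * q < t * p then 1 else 0) +
      t * p * (if (1 - t) * q ≥ t * p then 1 else 0) = min (t * p) ((1 - t) * q) := by
  rcases lt_or_ge ((1 - t) * q) (t * p) with h | h
  · rw [if_pos h, if_neg (not_le.mpr h), min_eq_right h.le]; ring
  · rw [if_neg (not_lt.mpr h), if_pos h, min_eq_left h]; ring

/-- Weak duality. -/
lemma dcw_weak (n : ℕ) (a b : Fin n → ℝ) (z : ℝ) (hz : z ∈ Set.Icc (0 : ℝ) 1)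
    (w : Fin n → ℝ) (hw : ∀ i, w i ∈ Set.Icc (0 : ℝ) 1) :
    ∑ i, min (z * a i) ((1 - z) * b i) ≤
      max (∑ i, w i * a i) (∑ i, (1 - w i) * b i) := by
  obtain ⟨hz0, hz1⟩ := hz
  have h1 : ∑ i, min (z * a i) ((1 - z) * b i)
      ≤ ∑ i, (z * (w i * a i) + (1 - z) * ((1 - w i) * b i)) := by
    refine Finset.sum_le_sum fun i _ => ?_
    obtain ⟨hw0, hw1⟩ := hw i
    have m1 : min (z * a i) ((1 - z) * b i) ≤ z * a i := min_le_left _ _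
    have m2 : min (z * a i) ((1 - z) * b i) ≤ (1 - z) * b i := min_le_right _ _
    nlinarith [mul_le_mul_of_nonneg_left m1 hw0,
      mul_le_mul_of_nonneg_left m2 (by linarith : (0:ℝ) ≤ 1 - w i)]
  have h2 : ∑ i, (z * (w i * a i) + (1 - z) * ((1 - w i) * b i))
      = z * (∑ i, w i * a i) + (1 - z) * (∑ i, (1 - w i) * b i) := by
    rw [Finset.mul_sum, Finset.mul_sum, Finset.sum_add_distrib]
  set A := ∑ i, w i * a i
  set B := ∑ i, (1 - w i) * b i
  have h3 : z * A + (1 - z) * B ≤ max A B := by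
    have := mul_le_mul_of_nonneg_left (le_max_left A B) hz0
    have := mul_le_mul_of_nonneg_left (le_max_right A B) (by linarith : (0:ℝ) ≤ 1 - z)
    nlinarith
  linarith [h1, h2 ▸ h1]

/-- Strong duality: an explicit primal point matching the dual value. -/
lemma dcw_strong (n : ℕ) (hn : 1 ≤ n) (a b : Fin n → ℝ)
    (ha : ∀ i, 0 < a i) (hb : ∀ i, 0 < b i) :
    ∃ t ∈ Set.Icc (0 : ℝ) 1, ∃ w : Fin n → ℝ, (∀ i, w i ∈ Set.Icc (0 : ℝ) 1) ∧
      max (∑ i, w i * a i) (∑ i, (1 - w i) * b i)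
        = ∑ i, min (t * a i) ((1 - t) * b i) := by
  classical
  have hab : ∀ i, 0 < a i + b i := fun i => add_pos (ha i) (hb i)
  set z : Fin n → ℝ := fun i => b i / (a i + b i) with hzdef
  have hz0 : ∀ i, 0 < z i := fun i => div_pos (hb i) (hab i)
  have hz1 : ∀ i, z i < 1 := fun i => by
    rw [hzdef]; rw [div_lt_one (hab i)]; linarith [ha i]
  have hid : ∀ (i : Fin n) (t : ℝ),
      t * a i - (1 - t) * b i = (t - z i) * (a i + b i) := by
    intro i t
    have h : z i * (a i + b i) = b i := div_mul_cancel₀ _ (hab i).ne'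
    nlinarith [h]
  have hnE : Nonempty (Fin n) := ⟨⟨0, hn⟩⟩
  set F : ℝ → ℝ := fun t => ∑ i, (if z i ≤ t then b i else -(a i)) with hFdef
  have hs : (Finset.univ.filter fun i => 0 ≤ F (z i)).Nonempty := by
    obtain ⟨j, -, hj⟩ := Finset.exists_max_image Finset.univ z Finset.univ_nonempty
    refine ⟨j, Finset.mem_filter.mpr ⟨Finset.mem_univ _, ?_⟩⟩
    have h : F (z j) = ∑ i, b i :=
      Finset.sum_congr rfl fun i _ => if_pos (hj i (Finset.mem_univ i))
    rw [h]; exact Finset.sum_nonneg fun i _ => (hb i).le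
  obtain ⟨i₀, hi₀s, hi₀min⟩ := Finset.exists_min_image _ z hs
  set t := z i₀ with htdef
  have H1 : 0 ≤ F t := (Finset.mem_filter.mp hi₀s).2
  have H2 : ∀ j, 0 ≤ F (z j) → t ≤ z j := fun j hj =>
    hi₀min j (Finset.mem_filter.mpr ⟨Finset.mem_univ _, hj⟩)
  set G : ℝ := ∑ i, (if z i < t then b i else -(a i)) with hGdef
  have H3 : G ≤ 0 := by
    by_cases hE : ∃ j, z j < t
    · obtain ⟨j, hj⟩ := hE
      obtain ⟨j', hj's, hj'max⟩ := Finset.exists_max_image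
        (Finset.univ.filter fun i => z i < t) z
        ⟨j, Finset.mem_filter.mpr ⟨Finset.mem_univ _, hj⟩⟩
      have hj't : z j' < t := (Finset.mem_filter.mp hj's).2
      have hFG : G = F (z j') := by
        refine Finset.sum_congr rfl fun i _ => ?_
        by_cases h : z i < t
        · rw [if_pos h, if_pos (hj'max i (Finset.mem_filter.mpr ⟨Finset.mem_univ _, h⟩))]
        · rw [if_neg h, if_neg (not_le.mpr (lt_of_lt_of_le hj't (not_lt.mp h)))]
      have hneg : ¬ 0 ≤ F (z j') := fun h0 => absurd (H2 j' h0) (not_le.mpr hj't)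
      rw [hFG]; exact (not_le.mp hneg).le
    · push_neg at hE
      have h : G = ∑ i, -(a i) :=
        Finset.sum_congr rfl fun i _ => if_neg (not_lt.mpr (hE i))
      rw [h]; exact Finset.sum_nonpos fun i _ => neg_nonpos.mpr (ha i).le
  set Aa : ℝ := ∑ i, (if t < z i then a i else 0) with hAadef
  set Bb : ℝ := ∑ i, (if z i < t then b i else 0) with hBbdef
  set Ea : ℝ := ∑ i, (if z i = t then a i else 0) with hEadef
  set Eb : ℝ := ∑ i, (if z i = t then b i else 0) with hEbdef
  have hF : F t = Bb + Eb - Aa := by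
    rw [hFdef, hBbdef, hEbdef, hAadef]
    simp only [← Finset.sum_add_distrib, ← Finset.sum_sub_distrib]
    refine Finset.sum_congr rfl fun i _ => ?_
    rcases lt_trichotomy (z i) t with h | h | h
    · simp [h, h.le, h.ne, not_lt.mpr h.le]
    · simp [h]
    · simp [not_le.mpr h, not_lt.mpr h.le, h.ne', h]
  have hG2 : G = Bb - Ea - Aa := by
    rw [hGdef, hBbdef, hEadef, hAadef]
    simp only [← Finset.sum_sub_distrib]
    refine Finset.sum_congr rfl fun i _ => ?_
    rcases lt_trichotomy (z i) t with h | h | h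
    · simp [h, h.ne, not_lt.mpr h.le]
    · simp [h]
    · simp [not_lt.mpr h.le, h.ne', h]
  have hEpos : 0 < Ea + Eb := by
    rw [hEadef, hEbdef, ← Finset.sum_add_distrib]
    refine Finset.sum_pos' (fun i _ => ?_) ⟨i₀, Finset.mem_univ _, ?_⟩
    · split_ifs with h
      · exact (hab i).le
      · simp
    · rw [if_pos rfl, if_pos rfl]; exact hab i₀
  set w₀ : ℝ := (Eb + Bb - Aa) / (Ea + Eb) with hw₀def
  have hw₀0 : 0 ≤ w₀ := div_nonneg (by rw [hF] at H1; linarith) hEpos.le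
  have hw₀1 : w₀ ≤ 1 := by
    rw [hw₀def, div_le_one hEpos]
    rw [hG2] at H3; linarith
  have hw₀mul : w₀ * (Ea + Eb) = Eb + Bb - Aa := div_mul_cancel₀ _ hEpos.ne'
  set w : Fin n → ℝ := fun i => if z i < t then 0 else if t < z i then 1 else w₀ with hwdef
  have hw : ∀ i, w i ∈ Set.Icc (0 : ℝ) 1 := by
    intro i; rw [hwdef]
    dsimp only
    split_ifs
    · exact ⟨le_refl _, zero_le_one⟩
    · exact ⟨zero_le_one, le_refl _⟩
    · exact ⟨hw₀0, hw₀1⟩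
  have hA : ∑ i, w i * a i = Aa + w₀ * Ea := by
    rw [hAadef, hEadef, Finset.mul_sum, ← Finset.sum_add_distrib]
    refine Finset.sum_congr rfl fun i _ => ?_
    rw [hwdef]; dsimp only
    rcases lt_trichotomy (z i) t with h | h | h
    · simp [h, not_lt.mpr h.le, h.ne]
    · simp [h]
    · simp [not_lt.mpr h.le, h, h.ne']
  have hB : ∑ i, (1 - w i) * b i = Bb + (1 - w₀) * Eb := by
    rw [hBbdef, hEbdef, Finset.mul_sum, ← Finset.sum_add_distrib]
    refine Finset.sum_congr rfl fun i _ => ?_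
    rw [hwdef]; dsimp only
    rcases lt_trichotomy (z i) t with h | h | h
    · simp [h, h.ne]
    · simp [h]
    · simp [not_lt.mpr h.le, h, h.ne']
  have hAB : ∑ i, w i * a i = ∑ i, (1 - w i) * b i := by
    rw [hA, hB]; linear_combination hw₀mul
  have hsum : ∑ i, (t * (w i * a i) + (1 - t) * ((1 - w i) * b i))
      = ∑ i, min (t * a i) ((1 - t) * b i) := by
    refine Finset.sum_congr rfl fun i _ => ?_
    rw [hwdef]; dsimp only
    rcases lt_trichotomy (z i) t with h | h | h
    · have hlt : (1 - t) * b i < t * a i := by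
        linarith [hid i t, mul_pos (sub_pos.mpr h) (hab i)]
      rw [if_pos h, min_eq_right hlt.le]; ring
    · have heq : t * a i = (1 - t) * b i := by
        have h2 := hid i t
        rw [h] at h2
        linear_combination h2
      rw [if_neg (not_lt.mpr h.ge), if_neg (not_lt.mpr h.le), min_eq_left heq.le]
      linear_combination (w₀ - 1) * heq
    · have hlt : t * a i < (1 - t) * b i := by
        linarith [hid i t, mul_pos (sub_pos.mpr h) (hab i)]
      rw [if_neg (not_lt.mpr h.le), if_pos h, min_eq_left hlt.le]; ring
  refine ⟨t, ⟨(hz0 i₀).le, (hz1 i₀).le⟩, w, hw, ?_⟩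
  have hcomb : ∑ i, (t * (w i * a i) + (1 - t) * ((1 - w i) * b i))
      = t * (∑ i, w i * a i) + (1 - t) * (∑ i, (1 - w i) * b i) := by
    rw [Finset.mul_sum, Finset.mul_sum, Finset.sum_add_distrib]
  rw [hAB, max_self, ← hsum, hcomb, hAB]; ring

/-- direct-control half of the warm-up proposition.
Two periods, no renewables, peak-demand grid cost `max(Q₁, Q₂)`, and `n` consumers with
linear indifference sets `R_i = {(w aᵢ, (1-w) bᵢ) : w ∈ [0,1]}`.  The optimal value of the
direct-control demand-response problem equals `max_{z ∈ [0,1]} L_n(z)`. -/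
theorem direct_control_warmup (n : ℕ) (hn : 1 ≤ n) (a b : Fin n → ℝ)
    (ha : ∀ i, 0 < a i) (hb : ∀ i, 0 < b i) :
    sInf {v : ℝ | ∃ q : Fin n → ℝ × ℝ,
        (∀ i, ∃ w ∈ Set.Icc (0 : ℝ) 1, q i = (w * a i, (1 - w) * b i)) ∧
        v = max (∑ i, (q i).1) (∑ i, (q i).2)} =
      sSup ((fun z : ℝ => ∑ i,
          ((1 - z) * b i * (if (1 - z) * b i < z * a i then 1 else 0) +
            z * a i * (if (1 - z) * b i ≥ z * a i then 1 else 0))) '' Set.Icc (0 : ℝ) 1) := by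
  classical
  have hfun : (fun z : ℝ => ∑ i,
      ((1 - z) * b i * (if (1 - z) * b i < z * a i then 1 else 0) +
        z * a i * (if (1 - z) * b i ≥ z * a i then 1 else 0)))
      = fun z : ℝ => ∑ i, min (z * a i) ((1 - z) * b i) :=
    funext fun z => Finset.sum_congr rfl fun i _ => dcw_min_eq_term z (a i) (b i)
  rw [hfun]
  set P : Set ℝ := {v : ℝ | ∃ q : Fin n → ℝ × ℝ,
      (∀ i, ∃ w ∈ Set.Icc (0 : ℝ) 1, q i = (w * a i, (1 - w) * b i)) ∧
      v = max (∑ i, (q i).1) (∑ i, (q i).2)} with hPdef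
  set Q : Set ℝ := (fun z : ℝ => ∑ i, min (z * a i) ((1 - z) * b i)) '' Set.Icc (0:ℝ) 1
    with hQdef
  -- membership helper for P
  have hPmem : ∀ w : Fin n → ℝ, (∀ i, w i ∈ Set.Icc (0:ℝ) 1) →
      max (∑ i, w i * a i) (∑ i, (1 - w i) * b i) ∈ P := by
    intro w hw
    refine ⟨fun i => (w i * a i, (1 - w i) * b i), fun i => ⟨w i, hw i, rfl⟩, rfl⟩
  -- weak duality elementwise
  have hweak : ∀ u ∈ Q, ∀ v ∈ P, u ≤ v := by
    rintro u ⟨zz, hzz, rfl⟩ v ⟨q, hq, rfl⟩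
    choose w hw hq' using hq
    have e1 : ∑ i, (q i).1 = ∑ i, w i * a i :=
      Finset.sum_congr rfl fun i _ => by rw [hq' i]
    have e2 : ∑ i, (q i).2 = ∑ i, (1 - w i) * b i :=
      Finset.sum_congr rfl fun i _ => by rw [hq' i]
    rw [e1, e2]
    exact dcw_weak n a b zz hzz w hw
  have hPne : P.Nonempty :=
    ⟨_, hPmem (fun _ => 0) (fun _ => ⟨le_refl _, zero_le_one⟩)⟩
  have hQne : Q.Nonempty := ⟨_, ⟨0, ⟨le_refl _, zero_le_one⟩, rfl⟩⟩
  obtain ⟨v₀, hv₀⟩ := hPne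
  have hQbdd : BddAbove Q := ⟨v₀, fun u hu => hweak u hu v₀ hv₀⟩
  obtain ⟨u₀, hu₀⟩ := hQne
  have hPbdd : BddBelow P := ⟨u₀, fun v hv => hweak u₀ hu₀ v hv⟩
  refine le_antisymm ?_ ?_
  · obtain ⟨t, ht, w, hw, heq⟩ := dcw_strong n hn a b ha hb
    have h1 : max (∑ i, w i * a i) (∑ i, (1 - w i) * b i) ∈ P := hPmem w hw
    have h2 : (∑ i, min (t * a i) ((1 - t) * b i)) ∈ Q := ⟨t, ht, rfl⟩
    calc sInf P ≤ max (∑ i, w i * a i) (∑ i, (1 - w i) * b i) := csInf_le hPbdd h1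
      _ = ∑ i, min (t * a i) ((1 - t) * b i) := heq
      _ ≤ sSup Q := le_csSup hQbdd h2
  · exact csSup_le ⟨u₀, hu₀⟩ fun u hu => le_csInf ⟨v₀, hv₀⟩ fun v hv => hweak u hu v hv
end

section
/- Fix an integer n ≥ 1 and positive reals a_1,…,a_n, b_1,…,b_n. With L_n(z) = Σ_{i=1}^n [ (1−z)b_i·𝟙((1−z)b_i < z a_i) + z a_i·𝟙((1−z)b_i ≥ z a_i) ], U_n⁺(z) = max( Σ_{i=1}^n a_i·𝟙(a_i z ≤ b_i(1−z)), Σ_{i=1}^n b_i·𝟙(a_i z > b_i(1−z)) ), and U_n⁻(z) = max( Σ_{i=1}^n a_i·𝟙(−a_i z ≤ b_i(−1+z)), Σ_{i=1}^n b_i·𝟙(−a_i z > b_i(−1+z)) ), one has max_{z ∈ [0,1]} L_n(z) ≤ min_{z ∈ [0,1]} min(U_n⁺(z), U_n⁻(z)). -/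
/-!
Direct control realises `L_n(z) = ∑ᵢ min (z aᵢ) ((1 - z) bᵢ)`. Any price level `w` splits the
consumers into a set `S` that consumes `aᵢ` in the first period and its complement, which
consumes `bᵢ` in the second, so each `U_n^±(w)` has the form `max (∑_{S} aᵢ) (∑_{Sᶜ} bᵢ)`.
Termwise, `min (z aᵢ) ((1 - z) bᵢ)` is at most `z aᵢ` on `S` and `(1 - z) bᵢ` off `S`, so
`L_n(z)` is bounded by a convex combination of the two sums, hence by their maximum.
-/

open Finset

lemma mul_ite_lt_add_mul_ite_ge_eq_min {α : Type*} [Ring α] [LinearOrder α] (x y : α) :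
    y * (if y < x then 1 else 0) + x * (if y ≥ x then 1 else 0) = min x y := by
  rcases lt_or_ge y x with h | h
  · simp [h, not_le.mpr h, min_eq_right h.le]
  · simp [h, not_lt.mpr h]

lemma sum_min_le_max_sum_ite {ι : Type*} (s : Finset ι) (a b : ι → ℝ) (p : ι → Prop)
    [DecidablePred p] {z : ℝ} (hz : z ∈ Set.Icc (0 : ℝ) 1) :
    ∑ i ∈ s, min (z * a i) ((1 - z) * b i) ≤
      max (∑ i ∈ s, a i * if p i then 1 else 0) (∑ i ∈ s, b i * if ¬ p i then 1 else 0) := by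
  set A := ∑ i ∈ s, a i * if p i then 1 else 0
  set B := ∑ i ∈ s, b i * if ¬ p i then 1 else 0
  have h1z : 0 ≤ 1 - z := sub_nonneg.mpr hz.2
  calc ∑ i ∈ s, min (z * a i) ((1 - z) * b i)
      ≤ ∑ i ∈ s, (z * (a i * if p i then 1 else 0) + (1 - z) * (b i * if ¬ p i then 1 else 0)) :=
        sum_le_sum fun i _ => by split_ifs <;> simp
    _ = z * A + (1 - z) * B := by rw [sum_add_distrib, ← mul_sum, ← mul_sum]
    _ ≤ z * max A B + (1 - z) * max A B := by
        gcongr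
        exacts [hz.1, le_max_left A B, le_max_right A B]
    _ = max A B := by ring

theorem direct_le_pricing_warmup_general (n : ℕ) (a b : Fin n → ℝ) :
    sSup ((fun z : ℝ => ∑ i,
        ((1 - z) * b i * (if (1 - z) * b i < z * a i then 1 else 0) +
          z * a i * (if (1 - z) * b i ≥ z * a i then 1 else 0))) '' Set.Icc (0 : ℝ) 1) ≤
      sInf ((fun z : ℝ => min
          (max (∑ i, a i * (if a i * z ≤ b i * (1 - z) then 1 else 0))
               (∑ i, b i * (if a i * z > b i * (1 - z) then 1 else 0)))
          (max (∑ i, a i * (if -(a i * z) ≤ b i * (-1 + z) then 1 else 0))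
               (∑ i, b i * (if -(a i * z) > b i * (-1 + z) then 1 else 0)))) ''
        Set.Icc (0 : ℝ) 1) := by
  have hIcc : (Set.Icc (0 : ℝ) 1).Nonempty := Set.nonempty_Icc.mpr zero_le_one
  refine le_csInf (hIcc.image _) ?_
  rintro _ ⟨w, -, rfl⟩
  refine csSup_le (hIcc.image _) ?_
  rintro _ ⟨z, hz, rfl⟩
  simp only [mul_ite_lt_add_mul_ite_ge_eq_min]
  have hU_plus := sum_min_le_max_sum_ite univ a b (fun i => a i * w ≤ b i * (1 - w)) hz
  have hU_minus := sum_min_le_max_sum_ite univ a b (fun i => -(a i * w) ≤ b i * (-1 + w)) hz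
  simp only [not_le] at hU_plus hU_minus
  exact le_min hU_plus hU_minus

/-- in the warm-up two-period setting, the optimal direct-control value
`max_{z ∈ [0,1]} L_n(z)` is at most the optimal pricing value
`min_{z ∈ [0,1]} min(U_n⁺(z), U_n⁻(z))`. -/
theorem direct_le_pricing_warmup (n : ℕ) (hn : 1 ≤ n) (a b : Fin n → ℝ)
    (ha : ∀ i, 0 < a i) (hb : ∀ i, 0 < b i) :
    sSup ((fun z : ℝ => ∑ i,
        ((1 - z) * b i * (if (1 - z) * b i < z * a i then 1 else 0) +
          z * a i * (if (1 - z) * b i ≥ z * a i then 1 else 0))) '' Set.Icc (0 : ℝ) 1) ≤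
      sInf ((fun z : ℝ => min
          (max (∑ i, a i * (if a i * z ≤ b i * (1 - z) then 1 else 0))
               (∑ i, b i * (if a i * z > b i * (1 - z) then 1 else 0)))
          (max (∑ i, a i * (if -(a i * z) ≤ b i * (-1 + z) then 1 else 0))
               (∑ i, b i * (if -(a i * z) > b i * (-1 + z) then 1 else 0)))) ''
        Set.Icc (0 : ℝ) 1) :=
  direct_le_pricing_warmup_general n a b
end

section
/- Let ρ : ℝ^d → ℝ be convex and positively homogeneous of degree one with dual set 𝒫 = {z ∈ ℝ^d : z·q ≤ ρ(q) for all q ∈ ℝ^d}, let K ⊂ ℝ^d be a nonempty compact convex set, define H(z) = min{z·q : q ∈ K}, and let q_0 ∈ ℝ^d. Suppose z* ∈ 𝒫 maximizes H(z) − z·q_0 over 𝒫, and that H is differentiable at z*. Then ρ(∇H(z*) − q_0) = H(z*) − z*·q_0; that is, the grid cost incurred when average consumption equals ∇H(z*) under the prices z* coincides with the optimal direct-control value max{H(z) − z·q_0 : z ∈ 𝒫}, so pricing with z* (or any positive multiple of it) closes the gap to direct control. -/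
/-!
Euler's identity for the positively homogeneous function `H` gives `H z* = ⟪∇H(z*), z*⟫`, so the
optimal value `H z* - ⟪z*, q₀⟫` is `⟪z*, ∇H(z*) - q₀⟫ ≤ ρ(∇H(z*) - q₀)`. Conversely, the analytic
Hahn–Banach theorem provides `z̄ ∈ 𝒫` attaining `ρ(∇H(z*) - q₀) = ⟪z̄, ∇H(z*) - q₀⟫`, and the
first-order optimality condition of `z*` on the convex set `𝒫` says `⟪z̄ - z*, ∇H(z*) - q₀⟫ ≤ 0`.
-/

open scoped RealInnerProductSpace

open Set

section Sublinear

variable {E : Type*} [AddCommGroup E] [Module ℝ E] {ρ : E → ℝ}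

theorem map_zero_of_posHomogeneous (hhom : ∀ α : ℝ, 0 ≤ α → ∀ q, ρ (α • q) = α * ρ q) :
    ρ 0 = 0 := by
  simpa using hhom 0 le_rfl 0

theorem ConvexOn.map_add_le_of_posHomogeneous (hconv : ConvexOn ℝ univ ρ)
    (hhom : ∀ α : ℝ, 0 ≤ α → ∀ q, ρ (α • q) = α * ρ q) (x y : E) :
    ρ (x + y) ≤ ρ x + ρ y := by
  have hmid := hconv.2 (mem_univ x) (mem_univ y) (by norm_num : (0 : ℝ) ≤ 1 / 2)
    (by norm_num : (0 : ℝ) ≤ 1 / 2) (by norm_num)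
  calc ρ (x + y) = 2 * ρ ((1 / 2 : ℝ) • x + (1 / 2 : ℝ) • y) := by
        rw [← hhom 2 zero_le_two]; congr 1; module
    _ ≤ ρ x + ρ y := by simp only [smul_eq_mul] at hmid; linarith

theorem ConvexOn.exists_linear_le_eq_of_posHomogeneous (hconv : ConvexOn ℝ univ ρ)
    (hhom : ∀ α : ℝ, 0 ≤ α → ∀ q, ρ (α • q) = α * ρ q) (p : E) :
    ∃ ℓ : E →ₗ[ℝ] ℝ, (∀ q, ℓ q ≤ ρ q) ∧ ℓ p = ρ p := by
  have hρ0 := map_zero_of_posHomogeneous hhom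
  let f : E →ₗ.[ℝ] ℝ := LinearPMap.mkSpanSingleton' p (ρ p) fun c hc => by
    rcases smul_eq_zero.1 hc with rfl | rfl <;> simp [hρ0]
  have hf : ∀ x : f.domain, f x ≤ ρ x := by
    rintro ⟨x, hx⟩
    obtain ⟨c, rfl⟩ := Submodule.mem_span_singleton.1 hx
    rw [LinearPMap.mkSpanSingleton'_apply, RingHom.id_apply, smul_eq_mul]
    rcases le_total 0 c with hc | hc
    · exact (hhom c hc p).ge
    · have := hconv.map_add_le_of_posHomogeneous hhom (c • p) ((-c) • p)
      rw [← add_smul, add_neg_cancel, zero_smul, hρ0, hhom _ (neg_nonneg.2 hc)] at this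
      linarith
  obtain ⟨ℓ, hℓf, hℓρ⟩ := exists_extension_of_le_sublinear f ρ
    (fun c hc => hhom c hc.le) (hconv.map_add_le_of_posHomogeneous hhom) hf
  exact ⟨ℓ, hℓρ, (hℓf ⟨p, Submodule.mem_span_singleton_self p⟩).trans
    (LinearPMap.mkSpanSingleton'_apply_self _ _ _ _)⟩

end Sublinear

section Dual

variable {F : Type*} [NormedAddCommGroup F] [InnerProductSpace ℝ F]

def dualSet (ρ : F → ℝ) : Set F := {z | ∀ q, ⟪z, q⟫ ≤ ρ q}

theorem convex_dualSet (ρ : F → ℝ) : Convex ℝ (dualSet ρ) := by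
  simp only [dualSet, ofPred_forall]
  exact convex_iInter fun q => convex_halfSpace_le ((innerₗ F).flip q).isLinear (ρ q)

theorem ConvexOn.exists_mem_dualSet_inner_eq [FiniteDimensional ℝ F] {ρ : F → ℝ}
    (hconv : ConvexOn ℝ univ ρ) (hhom : ∀ α : ℝ, 0 ≤ α → ∀ q, ρ (α • q) = α * ρ q) (p : F) :
    ∃ z ∈ dualSet ρ, ⟪z, p⟫ = ρ p := by
  obtain ⟨ℓ, hℓρ, hℓp⟩ := hconv.exists_linear_le_eq_of_posHomogeneous hhom p
  refine ⟨(InnerProductSpace.toDual ℝ F).symm (LinearMap.toContinuousLinearMap ℓ), ?_, ?_⟩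
  · intro q
    simpa [InnerProductSpace.toDual_symm_apply] using hℓρ q
  · simpa [InnerProductSpace.toDual_symm_apply] using hℓp

theorem sInf_image_inner_smul (K : Set F) (z : F) {t : ℝ} (ht : 0 ≤ t) :
    sInf ((fun q => ⟪t • z, q⟫) '' K) = t * sInf ((fun q => ⟪z, q⟫) '' K) := by
  rw [← smul_eq_mul, ← Real.sInf_smul_of_nonneg ht, ← image_smul, ← image_comp]
  exact congrArg sInf (image_congr fun q _ => real_inner_smul_left z q t)

end Dual

section FirstOrder

variable {E : Type*} [NormedAddCommGroup E] [NormedSpace ℝ E] {f : E → ℝ} {f' : E →L[ℝ] ℝ}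
  {a : E}

theorem HasFDerivAt.apply_self_eq_of_posHomogeneous (hf : HasFDerivAt f f' a)
    (hhom : ∀ t : ℝ, 0 < t → f (t • a) = t * f a) : f' a = f a := by
  have hray : HasDerivAt (fun t : ℝ => f (t • a)) (f' a) 1 := by
    simpa [Function.comp_def] using
      hf.comp_hasDerivAt_of_eq 1 ((hasDerivAt_id 1).smul_const a) (one_smul ℝ a).symm
  have hlin : HasDerivAt (fun t : ℝ => f (t • a)) (f a) 1 := by
    refine ((hasDerivAt_id 1).mul_const (f a)).congr_of_eventuallyEq ?_ |>.congr_deriv (one_mul _)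
    filter_upwards [Ioi_mem_nhds one_pos] with t ht using hhom t ht
  exact hray.unique hlin

theorem IsMaxOn.hasFDerivAt_sub_nonpos {s : Set E} (hs : Convex ℝ s) (hmax : IsMaxOn f s a)
    (hf : HasFDerivAt f f' a) (ha : a ∈ s) {z : E} (hz : z ∈ s) : f' (z - a) ≤ 0 :=
  hmax.localize.hasFDerivWithinAt_nonpos hf.hasFDerivWithinAt
    (sub_mem_posTangentConeAt_of_segment_subset (hs.segment_subset ha hz))

end FirstOrder

theorem pricing_closes_gap_general (d : ℕ) (ρ : EuclideanSpace ℝ (Fin d) → ℝ)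
    (hconv : ConvexOn ℝ Set.univ ρ)
    (hhom : ∀ α : ℝ, 0 ≤ α → ∀ q, ρ (α • q) = α * ρ q)
    (K : Set (EuclideanSpace ℝ (Fin d))) (q₀ : EuclideanSpace ℝ (Fin d))
    (H : EuclideanSpace ℝ (Fin d) → ℝ)
    (hH : ∀ z, H z = sInf ((fun q => ⟪z, q⟫) '' K))
    (zstar : EuclideanSpace ℝ (Fin d))
    (hzP : ∀ q, ⟪zstar, q⟫ ≤ ρ q)
    (hmax : ∀ z : EuclideanSpace ℝ (Fin d), (∀ q, ⟪z, q⟫ ≤ ρ q) →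
      H z - ⟪z, q₀⟫ ≤ H zstar - ⟪zstar, q₀⟫)
    (g : EuclideanSpace ℝ (Fin d)) (hg : HasGradientAt H g zstar) :
    ρ (g - q₀) = H zstar - ⟪zstar, q₀⟫ := by
  have hEuler : ⟪g, zstar⟫ = H zstar := by
    simpa using hg.hasFDerivAt.apply_self_eq_of_posHomogeneous fun t ht => by
      rw [hH, hH, sInf_image_inner_smul K zstar ht.le]
  have hvalue : ⟪zstar, g - q₀⟫ = H zstar - ⟪zstar, q₀⟫ := by
    rw [inner_sub_right, real_inner_comm, hEuler]
  obtain ⟨zbar, hzbarP, hzbar⟩ := hconv.exists_mem_dualSet_inner_eq hhom (g - q₀)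
  have hfoc : ⟪zbar, g - q₀⟫ ≤ ⟪zstar, g - q₀⟫ := by
    have hobj : IsMaxOn (fun z => H z - ⟪q₀, z⟫) (dualSet ρ) zstar := fun z hz =>
      show _ ≤ _ by simpa only [real_inner_comm q₀] using hmax z hz
    have := hobj.hasFDerivAt_sub_nonpos (convex_dualSet ρ)
      (hg.hasFDerivAt.sub (InnerProductSpace.toDual ℝ _ q₀).hasFDerivAt) hzP hzbarP
    rw [← sub_nonpos, ← inner_sub_left, real_inner_comm]
    simpa [inner_sub_left] using this
  exact le_antisymm (hzbar ▸ hvalue ▸ hfoc) (hvalue ▸ hzP (g - q₀))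

/-- deterministic core of mean-field optimality of dynamic pricing:
with `ρ` convex and positively one-homogeneous, `𝒫` its dual set, `K` nonempty compact
convex, `H(z) = min{z·q : q ∈ K}`, and `q₀ ∈ ℝ^d`, if `z* ∈ 𝒫` maximizes `H(z) − z·q₀`
over `𝒫` and `H` is differentiable at `z*` with gradient `∇H(z*)`, then
`ρ(∇H(z*) − q₀) = H(z*) − z*·q₀`. -/
theorem pricing_closes_gap (d : ℕ) (ρ : EuclideanSpace ℝ (Fin d) → ℝ)
    (hconv : ConvexOn ℝ Set.univ ρ)
    (hhom : ∀ α : ℝ, 0 ≤ α → ∀ q, ρ (α • q) = α * ρ q)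
    (K : Set (EuclideanSpace ℝ (Fin d))) (hKne : K.Nonempty) (hKc : IsCompact K)
    (hKconv : Convex ℝ K) (q₀ : EuclideanSpace ℝ (Fin d))
    (H : EuclideanSpace ℝ (Fin d) → ℝ)
    (hH : ∀ z, H z = sInf ((fun q => ⟪z, q⟫) '' K))
    (zstar : EuclideanSpace ℝ (Fin d))
    (hzP : ∀ q, ⟪zstar, q⟫ ≤ ρ q)
    (hmax : ∀ z : EuclideanSpace ℝ (Fin d), (∀ q, ⟪z, q⟫ ≤ ρ q) →
      H z - ⟪z, q₀⟫ ≤ H zstar - ⟪zstar, q₀⟫)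
    (g : EuclideanSpace ℝ (Fin d)) (hg : HasGradientAt H g zstar) :
    ρ (g - q₀) = H zstar - ⟪zstar, q₀⟫ :=
  pricing_closes_gap_general d ρ hconv hhom K q₀ H hH zstar hzP hmax g hg
end

section
/- Let ρ : ℝ^d → ℝ be convex, positively homogeneous of degree one, nonnegative, and satisfy ρ(x) = 0 if and only if x = 0; let 𝒫 = {z ∈ ℝ^d : z·q ≤ ρ(q) for all q ∈ ℝ^d} be its dual set. Let K ⊂ ℝ^d be a nonempty compact convex set, define H(z) = min{z·q : q ∈ K}, and let q_0 ∈ ℝ^d with q_0 ∉ K. Suppose z* ∈ 𝒫 maximizes H(z) − z·q_0 over 𝒫 and H is differentiable at z*. Then z*·(∇H(z*) − q_0) > 0; that is, the average per-consumer grid revenue under the optimal prices z* is strictly positive. -/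
open scoped RealInnerProductSpace Pointwise

/-!
`H` is positively homogeneous, so Euler's identity gives `z*·∇H(z*) = H(z*)` and the revenue is
the optimal value `H(z*) − z*·q₀`. That value is positive: separating `q₀` from `K` yields a
direction `z` with `H(z) > z·q₀`, and since `ρ ≥ c‖·‖` for some `c > 0` (minimum of `ρ` on the
unit sphere), a positive multiple of `z` lies in the dual set.
-/

section

variable {E : Type*}

theorem sInf_image_inner_smul_left [NormedAddCommGroup E] [InnerProductSpace ℝ E]
    (K : Set E) {t : ℝ} (ht : 0 ≤ t) (z : E) :
    sInf ((fun q => ⟪t • z, q⟫) '' K) = t * sInf ((fun q => ⟪z, q⟫) '' K) := by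
  have himg : (fun q => ⟪t • z, q⟫) '' K = t • (fun q => ⟪z, q⟫) '' K := by
    rw [← Set.image_smul, Set.image_image]
    exact Set.image_congr fun q _ => real_inner_smul_left z q t
  rw [himg, Real.sInf_smul_of_nonneg ht, smul_eq_mul]

theorem HasFDerivAt.apply_self_of_homogeneous [NormedAddCommGroup E] [NormedSpace ℝ E]
    {f : E → ℝ} {f' : E →L[ℝ] ℝ} {x : E} (hf : HasFDerivAt f f' x)
    (hhom : ∀ t : ℝ, 0 < t → f (t • x) = t * f x) : f' x = f x := by
  have hline : HasDerivAt (fun t : ℝ => f (t • x)) (f' x) 1 := by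
    have := hf.comp_hasDerivAt_of_eq (1 : ℝ) ((hasDerivAt_id (1 : ℝ)).smul_const x)
      (one_smul ℝ x).symm
    simp only [one_smul] at this
    exact this
  have hray : (fun t : ℝ => f (t • x)) =ᶠ[nhds 1] fun t => t * f x :=
    Filter.eventually_of_mem (Ioi_mem_nhds one_pos) fun t ht => hhom t ht
  simpa using hline.unique (((hasDerivAt_id (1 : ℝ)).mul_const (f x)).congr_of_eventuallyEq hray)

theorem exists_pos_mul_norm_le_of_homogeneous [NormedAddCommGroup E] [NormedSpace ℝ E]
    [ProperSpace E] {ρ : E → ℝ} (hcont : Continuous ρ)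
    (hhom : ∀ α : ℝ, 0 ≤ α → ∀ q, ρ (α • q) = α * ρ q) (hpos : ∀ x ≠ 0, 0 < ρ x) :
    ∃ c > 0, ∀ q, c * ‖q‖ ≤ ρ q := by
  cases subsingleton_or_nontrivial E
  · refine ⟨1, one_pos, fun q => ?_⟩
    simpa [Subsingleton.elim q 0] using (hhom 0 le_rfl 0).ge
  obtain ⟨x₀, hx₀, hmin⟩ := (isCompact_sphere (0 : E) 1).exists_isMinOn
    (NormedSpace.sphere_nonempty.mpr zero_le_one) hcont.continuousOn
  have hx₀ne : x₀ ≠ 0 := ne_zero_of_mem_unit_sphere ⟨x₀, hx₀⟩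
  refine ⟨ρ x₀, hpos x₀ hx₀ne, fun q => ?_⟩
  rcases eq_or_ne q 0 with rfl | hq
  · simpa using (hhom 0 le_rfl 0).ge
  have hnq : 0 < ‖q‖ := norm_pos_iff.mpr hq
  have hunit : ‖q‖⁻¹ • q ∈ Metric.sphere (0 : E) 1 := by
    rw [mem_sphere_zero_iff_norm, norm_smul, norm_inv, norm_norm, inv_mul_cancel₀ hnq.ne']
  calc ρ x₀ * ‖q‖ ≤ ρ (‖q‖⁻¹ • q) * ‖q‖ := by gcongr; exact hmin hunit
    _ = ρ q := by rw [hhom _ (inv_nonneg.mpr hnq.le)]; field_simp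

theorem exists_pos_smul_inner_le [NormedAddCommGroup E] [InnerProductSpace ℝ E] {ρ : E → ℝ}
    {c : ℝ} (hc : 0 < c) (hρ : ∀ q, c * ‖q‖ ≤ ρ q) (z : E) :
    ∃ t : ℝ, 0 < t ∧ ∀ q, ⟪t • z, q⟫ ≤ ρ q := by
  refine ⟨c / (‖z‖ + 1), by positivity, fun q => ?_⟩
  have hshrink : c / (‖z‖ + 1) * ‖z‖ ≤ c := by
    rw [div_mul_eq_mul_div, div_le_iff₀ (by positivity)]
    nlinarith [norm_nonneg z]
  calc ⟪(c / (‖z‖ + 1)) • z, q⟫ ≤ ‖(c / (‖z‖ + 1)) • z‖ * ‖q‖ := real_inner_le_norm _ _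
    _ ≤ c * ‖q‖ := by
      rw [norm_smul, Real.norm_of_nonneg (by positivity)]
      gcongr
    _ ≤ ρ q := hρ q

theorem exists_inner_lt_sInf_image_inner [NormedAddCommGroup E] [InnerProductSpace ℝ E]
    [CompleteSpace E] {K : Set E} {q₀ : E} (hKne : K.Nonempty) (hKconv : Convex ℝ K)
    (hKcl : IsClosed K) (hq₀ : q₀ ∉ K) :
    ∃ z : E, ⟪z, q₀⟫ < sInf ((fun q => ⟪z, q⟫) '' K) := by
  obtain ⟨f, u, hfK, hfq₀⟩ := geometric_hahn_banach_closed_point hKconv hKcl hq₀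
  have hinner : ∀ w, ⟪-(InnerProductSpace.toDual ℝ E).symm f, w⟫ = -f w := fun w => by
    rw [inner_neg_left, InnerProductSpace.toDual_symm_apply]
  refine ⟨-(InnerProductSpace.toDual ℝ E).symm f, ?_⟩
  refine (hinner q₀).trans_lt ((neg_lt_neg hfq₀).trans_le (le_csInf (hKne.image _) ?_))
  rintro _ ⟨q, hq, rfl⟩
  exact (neg_le_neg (hfK q hq).le).trans_eq (hinner q).symm

end

theorem positive_revenue_general (d : ℕ) (ρ : EuclideanSpace ℝ (Fin d) → ℝ)
    (hconv : ConvexOn ℝ Set.univ ρ)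
    (hhom : ∀ α : ℝ, 0 ≤ α → ∀ q, ρ (α • q) = α * ρ q)
    (hnonneg : ∀ x, 0 ≤ ρ x)
    (hzero : ∀ x, ρ x = 0 ↔ x = 0)
    (K : Set (EuclideanSpace ℝ (Fin d))) (hKne : K.Nonempty) (hKc : IsCompact K)
    (hKconv : Convex ℝ K) (q₀ : EuclideanSpace ℝ (Fin d)) (hq₀ : q₀ ∉ K)
    (H : EuclideanSpace ℝ (Fin d) → ℝ)
    (hH : ∀ z, H z = sInf ((fun q => ⟪z, q⟫) '' K))
    (zstar : EuclideanSpace ℝ (Fin d))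
    (hmax : ∀ z : EuclideanSpace ℝ (Fin d), (∀ q, ⟪z, q⟫ ≤ ρ q) →
      H z - ⟪z, q₀⟫ ≤ H zstar - ⟪zstar, q₀⟫)
    (g : EuclideanSpace ℝ (Fin d)) (hg : HasGradientAt H g zstar) :
    0 < ⟪zstar, g - q₀⟫ := by
  have hHhom : ∀ t : ℝ, 0 ≤ t → ∀ z, H (t • z) = t * H z := fun t ht z => by
    rw [hH, hH, sInf_image_inner_smul_left K ht]
  have hEuler : ⟪zstar, g⟫ = H zstar := by
    rw [real_inner_comm]
    simpa using hg.hasFDerivAt.apply_self_of_homogeneous fun t ht => hHhom t ht.le zstar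
  have hρpos : ∀ x ≠ 0, 0 < ρ x := fun x hx => (hnonneg x).lt_of_ne' (mt (hzero x).mp hx)
  obtain ⟨c, hc, hρ⟩ := exists_pos_mul_norm_le_of_homogeneous
    (continuousOn_univ.mp (hconv.continuousOn isOpen_univ)) hhom hρpos
  obtain ⟨z, hz⟩ := exists_inner_lt_sInf_image_inner hKne hKconv hKc.isClosed hq₀
  obtain ⟨t, ht, htz⟩ := exists_pos_smul_inner_le hc hρ z
  have hvalue := hmax (t • z) htz
  rw [hHhom t ht.le, real_inner_smul_left, hH z] at hvalue
  rw [inner_sub_right, hEuler]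
  nlinarith

/-- strictly positive revenue under optimal prices: with `ρ` convex,
positively one-homogeneous, nonnegative and vanishing only at `0`, `𝒫` its dual set, `K`
nonempty compact convex, `H(z) = min{z·q : q ∈ K}`, and `q₀ ∉ K`, if `z* ∈ 𝒫` maximizes
`H(z) − z·q₀` over `𝒫` and `H` is differentiable at `z*` with gradient `∇H(z*)`, then
`z*·(∇H(z*) − q₀) > 0`. -/
theorem positive_revenue (d : ℕ) (ρ : EuclideanSpace ℝ (Fin d) → ℝ)
    (hconv : ConvexOn ℝ Set.univ ρ)
    (hhom : ∀ α : ℝ, 0 ≤ α → ∀ q, ρ (α • q) = α * ρ q)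
    (hnonneg : ∀ x, 0 ≤ ρ x)
    (hzero : ∀ x, ρ x = 0 ↔ x = 0)
    (K : Set (EuclideanSpace ℝ (Fin d))) (hKne : K.Nonempty) (hKc : IsCompact K)
    (hKconv : Convex ℝ K) (q₀ : EuclideanSpace ℝ (Fin d)) (hq₀ : q₀ ∉ K)
    (H : EuclideanSpace ℝ (Fin d) → ℝ)
    (hH : ∀ z, H z = sInf ((fun q => ⟪z, q⟫) '' K))
    (zstar : EuclideanSpace ℝ (Fin d))
    (hzP : ∀ q, ⟪zstar, q⟫ ≤ ρ q)
    (hmax : ∀ z : EuclideanSpace ℝ (Fin d), (∀ q, ⟪z, q⟫ ≤ ρ q) →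
      H z - ⟪z, q₀⟫ ≤ H zstar - ⟪zstar, q₀⟫)
    (g : EuclideanSpace ℝ (Fin d)) (hg : HasGradientAt H g zstar) :
    0 < ⟪zstar, g - q₀⟫ :=
  positive_revenue_general d ρ hconv hhom hnonneg hzero K hKne hKc hKconv q₀ hq₀ H hH zstar hmax g
    hg
end

section
/- Let ρ : ℝ^d → ℝ be convex and positively homogeneous of degree one, and suppose ρ satisfies the monotonicity property: for every pair q, r ∈ ℝ^d such that for each coordinate j = 1,…,d either 0 ≤ r_j ≤ q_j or (q_j ≤ r_j and r_j = 0), one has ρ(r) ≤ ρ(q). Let 𝒫 = {z ∈ ℝ^d : z·q ≤ ρ(q) for all q ∈ ℝ^d}. Then for every p ∈ 𝒫, the componentwise positive part p₊ = max(p, 0) also belongs to 𝒫. -/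
open scoped RealInnerProductSpace

/-!
Given `q`, let `r j = q j⁺` where `p j ≥ 0` and `r j = 0` elsewhere. Coordinatewise `p j⁺ q j ≤ p j r j`, so
`⟪p₊, q⟫ ≤ ⟪p, r⟫ ≤ ρ r`, and `r` is obtained from `q` by moves the monotonicity property allows,
so `ρ r ≤ ρ q`.
-/

namespace EuclideanSpace

variable {ι : Type*}

noncomputable def truncate (p q : EuclideanSpace ℝ ι) : EuclideanSpace ℝ ι :=
  WithLp.toLp 2 fun j => if 0 ≤ p j then max (q j) 0 else 0

lemma truncate_apply (p q : EuclideanSpace ℝ ι) (j : ι) :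
    truncate p q j = if 0 ≤ p j then max (q j) 0 else 0 := rfl

lemma truncate_apply_cases (p q : EuclideanSpace ℝ ι) (j : ι) :
    (0 ≤ truncate p q j ∧ truncate p q j ≤ q j) ∨ (q j ≤ truncate p q j ∧ truncate p q j = 0) := by
  rw [truncate_apply]
  split_ifs
  · rcases le_total 0 (q j) with hq | hq
    · exact .inl ⟨le_max_right _ _, (max_eq_left hq).le⟩
    · exact .inr ⟨le_max_left _ _, max_eq_right hq⟩
  · rcases le_total 0 (q j) with hq | hq
    · exact .inl ⟨le_rfl, hq⟩
    · exact .inr ⟨hq, rfl⟩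

lemma inner_posPart_le_inner_truncate [Fintype ι] (p q : EuclideanSpace ℝ ι) :
    ⟪(WithLp.toLp 2 fun j => max (p j) 0 : EuclideanSpace ℝ ι), q⟫ ≤ ⟪p, truncate p q⟫ := by
  simp only [PiLp.inner_apply, RCLike.inner_apply, conj_trivial, truncate_apply]
  refine Finset.sum_le_sum fun j _ => ?_
  split_ifs with hp
  · rw [max_eq_left hp, mul_comm (q j), mul_comm (max (q j) 0)]
    exact mul_le_mul_of_nonneg_left (le_max_left _ _) hp
  · rw [max_eq_right (not_le.mp hp).le, mul_zero, zero_mul]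

end EuclideanSpace

theorem dual_set_closed_under_pos_part_general (d : ℕ) (ρ : EuclideanSpace ℝ (Fin d) → ℝ)
    (hmono : ∀ q r : EuclideanSpace ℝ (Fin d),
      (∀ j, (0 ≤ r j ∧ r j ≤ q j) ∨ (q j ≤ r j ∧ r j = 0)) → ρ r ≤ ρ q)
    (p : EuclideanSpace ℝ (Fin d)) (hp : ∀ q, ⟪p, q⟫ ≤ ρ q) :
    (WithLp.toLp 2 (fun j => max (p j) 0) : EuclideanSpace ℝ (Fin d)) ∈
      {z : EuclideanSpace ℝ (Fin d) | ∀ q, ⟪z, q⟫ ≤ ρ q} := by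
  intro q
  calc _ ≤ ⟪p, EuclideanSpace.truncate p q⟫ := EuclideanSpace.inner_posPart_le_inner_truncate p q
    _ ≤ ρ (EuclideanSpace.truncate p q) := hp _
    _ ≤ ρ q := hmono q _ (EuclideanSpace.truncate_apply_cases p q)

/-- if the convex, positively one-homogeneous grid cost `ρ` satisfies the
coordinatewise monotonicity property, then the dual set `𝒫` is closed under taking the
componentwise positive part: `p ∈ 𝒫 → p₊ ∈ 𝒫`. -/
theorem dual_set_closed_under_pos_part (d : ℕ) (ρ : EuclideanSpace ℝ (Fin d) → ℝ)
    (hconv : ConvexOn ℝ Set.univ ρ)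
    (hhom : ∀ α : ℝ, 0 ≤ α → ∀ q, ρ (α • q) = α * ρ q)
    (hmono : ∀ q r : EuclideanSpace ℝ (Fin d),
      (∀ j, (0 ≤ r j ∧ r j ≤ q j) ∨ (q j ≤ r j ∧ r j = 0)) → ρ r ≤ ρ q)
    (p : EuclideanSpace ℝ (Fin d)) (hp : ∀ q, ⟪p, q⟫ ≤ ρ q) :
    (WithLp.toLp 2 (fun j => max (p j) 0) : EuclideanSpace ℝ (Fin d)) ∈
      {z : EuclideanSpace ℝ (Fin d) | ∀ q, ⟪z, q⟫ ≤ ρ q} :=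
  dual_set_closed_under_pos_part_general d ρ hmono p hp
end

section
/- Let ρ : ℝ^d → ℝ be convex, positively homogeneous of degree one, and satisfy the monotonicity property (for q, r ∈ ℝ^d: if for each coordinate j either 0 ≤ r_j ≤ q_j or (q_j ≤ r_j and r_j = 0), then ρ(r) ≤ ρ(q)); let 𝒫 be its dual set. Let K ⊂ ℝ^d be a nonempty compact convex set and q_0 ∈ ℝ^d such that every q ∈ K satisfies q ≥ q_0 componentwise, and define H(z) = min{z·q : q ∈ K}. Then: (i) for every p ∈ ℝ^d, H(p₊) − p₊·q_0 ≥ H(p) − p·q_0, where p₊ is the componentwise positive part of p; and (ii) consequently, if z* maximizes H(z) − z·q_0 over 𝒫, then z*₊ ∈ 𝒫 is also a maximizer, so there exists a componentwise nonnegative optimal price. -/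
/-!
Against the scaled production `q₀`, the objective is `min_{q ∈ K} z·(q - q₀)`, and every
`q - q₀` with `q ∈ K` is a nonnegative vector, on which raising `p` to `p₊` can only increase
the pairing. For the dual set: pairing `z₊` with `q` is bounded by pairing `z` with the vector `r`
that keeps `q₊` on the support of `z₊` and is zero elsewhere, and monotonicity of `ρ` gives
`ρ r ≤ ρ q`.
-/

open scoped RealInnerProductSpace

namespace EuclideanSpace

variable {ι : Type*}

theorem inner_eq_sum_mul [Fintype ι] (x y : EuclideanSpace ℝ ι) : ⟪x, y⟫ = ∑ j, x j * y j := by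
  simp [PiLp.inner_apply, mul_comm]

theorem inner_le_inner_of_le_of_nonneg [Fintype ι] {x y v : EuclideanSpace ℝ ι}
    (hxy : ∀ j, x j ≤ y j) (hv : ∀ j, 0 ≤ v j) : ⟪x, v⟫ ≤ ⟪y, v⟫ := by
  rw [inner_eq_sum_mul, inner_eq_sum_mul]
  exact Finset.sum_le_sum fun j _ => mul_le_mul_of_nonneg_right (hxy j) (hv j)

noncomputable def restrictPosPart (z q : EuclideanSpace ℝ ι) : EuclideanSpace ℝ ι :=
  WithLp.toLp 2 fun j => if 0 < z j then max (q j) 0 else 0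

theorem inner_posPart_le_inner_restrictPosPart [Fintype ι] {z z' : EuclideanSpace ℝ ι}
    (hz' : ∀ j, z' j = max (z j) 0) (q : EuclideanSpace ℝ ι) :
    ⟪z', q⟫ ≤ ⟪z, restrictPosPart z q⟫ := by
  rw [inner_eq_sum_mul, inner_eq_sum_mul]
  refine Finset.sum_le_sum fun j _ => ?_
  simp only [restrictPosPart, hz']
  split_ifs with h
  · rw [max_eq_left h.le]
    exact mul_le_mul_of_nonneg_left (le_max_left _ _) h.le
  · rw [max_eq_right (not_lt.mp h), zero_mul, mul_zero]

theorem restrictPosPart_between (z q : EuclideanSpace ℝ ι) (j : ι) :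
    (0 ≤ restrictPosPart z q j ∧ restrictPosPart z q j ≤ q j) ∨
      (q j ≤ restrictPosPart z q j ∧ restrictPosPart z q j = 0) := by
  simp only [restrictPosPart]
  rcases le_or_gt 0 (q j) with hq | hq <;> split_ifs
  · exact .inl ⟨le_max_right _ _, (max_eq_left hq).le⟩
  · exact .inl ⟨le_rfl, hq⟩
  · exact .inr ⟨hq.le.trans (le_max_right _ _), max_eq_right hq.le⟩
  · exact .inr ⟨hq.le, rfl⟩

theorem posPart_mem_dual [Fintype ι] {ρ : EuclideanSpace ℝ ι → ℝ}
    (hmono : ∀ q r : EuclideanSpace ℝ ι,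
      (∀ j, (0 ≤ r j ∧ r j ≤ q j) ∨ (q j ≤ r j ∧ r j = 0)) → ρ r ≤ ρ q)
    {z z' : EuclideanSpace ℝ ι} (hz : ∀ q, ⟪z, q⟫ ≤ ρ q) (hz' : ∀ j, z' j = max (z j) 0)
    (q : EuclideanSpace ℝ ι) : ⟪z', q⟫ ≤ ρ q :=
  calc ⟪z', q⟫ ≤ ⟪z, restrictPosPart z q⟫ := inner_posPart_le_inner_restrictPosPart hz' q
    _ ≤ ρ (restrictPosPart z q) := hz _
    _ ≤ ρ q := hmono q _ (restrictPosPart_between z q)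

end EuclideanSpace

theorem sInf_image_inner_sub_inner_le {E : Type*} [NormedAddCommGroup E] [InnerProductSpace ℝ E]
    {K : Set E} (hKc : IsCompact K) (hKne : K.Nonempty) {p p' : E} (q₀ : E)
    (h : ∀ q ∈ K, ⟪p, q - q₀⟫ ≤ ⟪p', q - q₀⟫) :
    sInf ((fun q => ⟪p, q⟫) '' K) - ⟪p, q₀⟫ ≤ sInf ((fun q => ⟪p', q⟫) '' K) - ⟪p', q₀⟫ := by
  have hbdd : BddBelow ((fun q => ⟪p, q⟫) '' K) :=
    (hKc.image (continuous_const.inner continuous_id)).bddBelow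
  rw [le_sub_iff_add_le]
  refine le_csInf (hKne.image fun q => ⟪p', q⟫) ?_
  rintro _ ⟨q, hq, rfl⟩
  have hinf : sInf ((fun q => ⟪p, q⟫) '' K) ≤ ⟪p, q⟫ := csInf_le hbdd ⟨q, hq, rfl⟩
  have hq' := h q hq
  rw [inner_sub_right, inner_sub_right] at hq'
  linarith

theorem nonnegative_optimal_prices_general (d : ℕ) (ρ : EuclideanSpace ℝ (Fin d) → ℝ)
    (hmono : ∀ q r : EuclideanSpace ℝ (Fin d),
      (∀ j, (0 ≤ r j ∧ r j ≤ q j) ∨ (q j ≤ r j ∧ r j = 0)) → ρ r ≤ ρ q)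
    (K : Set (EuclideanSpace ℝ (Fin d))) (hKne : K.Nonempty) (hKc : IsCompact K)
    (q₀ : EuclideanSpace ℝ (Fin d))
    (hdom : ∀ q ∈ K, ∀ j, q₀ j ≤ q j)
    (H : EuclideanSpace ℝ (Fin d) → ℝ)
    (hH : ∀ z, H z = sInf ((fun q => ⟪z, q⟫) '' K))
    (P : Set (EuclideanSpace ℝ (Fin d)))
    (hP : P = {z : EuclideanSpace ℝ (Fin d) | ∀ q, ⟪z, q⟫ ≤ ρ q})
    (pos : EuclideanSpace ℝ (Fin d) → EuclideanSpace ℝ (Fin d))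
    (hpos : ∀ p j, pos p j = max (p j) 0) :
    (∀ p : EuclideanSpace ℝ (Fin d),
        H p - ⟪p, q₀⟫ ≤ H (pos p) - ⟪pos p, q₀⟫) ∧
    (∀ zstar ∈ P, (∀ z ∈ P, H z - ⟪z, q₀⟫ ≤ H zstar - ⟪zstar, q₀⟫) →
        pos zstar ∈ P ∧
        ∀ z ∈ P, H z - ⟪z, q₀⟫ ≤ H (pos zstar) - ⟪pos zstar, q₀⟫) := by
  have improve : ∀ p, H p - ⟪p, q₀⟫ ≤ H (pos p) - ⟪pos p, q₀⟫ := fun p => by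
    rw [hH, hH]
    refine sInf_image_inner_sub_inner_le hKc hKne q₀ fun q hq => ?_
    refine EuclideanSpace.inner_le_inner_of_le_of_nonneg (fun j => ?_) fun j => ?_
    · exact (hpos p j).symm ▸ le_max_left _ _
    · exact sub_nonneg.mpr (hdom q hq j)
  refine ⟨improve, fun zstar hzstar hmax => ⟨?_, fun z hz => (hmax z hz).trans (improve zstar)⟩⟩
  subst hP
  exact EuclideanSpace.posPart_mem_dual hmono hzstar (hpos zstar)

/-- nonnegative optimal prices: with `ρ` convex, positively
one-homogeneous and coordinatewise monotone, `𝒫` its dual set, `K` nonempty compact convex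
with `q ≥ q₀` componentwise for every `q ∈ K`, and `H(z) = min{z·q : q ∈ K}`:
(i) for every `p`, `H(p₊) − p₊·q₀ ≥ H(p) − p·q₀`; and (ii) if `z*` maximizes `H(z) − z·q₀`
over `𝒫`, then `z*₊ ∈ 𝒫` is also a maximizer. -/
theorem nonnegative_optimal_prices (d : ℕ) (ρ : EuclideanSpace ℝ (Fin d) → ℝ)
    (hconv : ConvexOn ℝ Set.univ ρ)
    (hhom : ∀ α : ℝ, 0 ≤ α → ∀ q, ρ (α • q) = α * ρ q)
    (hmono : ∀ q r : EuclideanSpace ℝ (Fin d),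
      (∀ j, (0 ≤ r j ∧ r j ≤ q j) ∨ (q j ≤ r j ∧ r j = 0)) → ρ r ≤ ρ q)
    (K : Set (EuclideanSpace ℝ (Fin d))) (hKne : K.Nonempty) (hKc : IsCompact K)
    (hKconv : Convex ℝ K) (q₀ : EuclideanSpace ℝ (Fin d))
    (hdom : ∀ q ∈ K, ∀ j, q₀ j ≤ q j)
    (H : EuclideanSpace ℝ (Fin d) → ℝ)
    (hH : ∀ z, H z = sInf ((fun q => ⟪z, q⟫) '' K))
    (P : Set (EuclideanSpace ℝ (Fin d)))
    (hP : P = {z : EuclideanSpace ℝ (Fin d) | ∀ q, ⟪z, q⟫ ≤ ρ q})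
    (pos : EuclideanSpace ℝ (Fin d) → EuclideanSpace ℝ (Fin d))
    (hpos : ∀ p j, pos p j = max (p j) 0) :
    (∀ p : EuclideanSpace ℝ (Fin d),
        H p - ⟪p, q₀⟫ ≤ H (pos p) - ⟪pos p, q₀⟫) ∧
    (∀ zstar ∈ P, (∀ z ∈ P, H z - ⟪z, q₀⟫ ≤ H zstar - ⟪zstar, q₀⟫) →
        pos zstar ∈ P ∧
        ∀ z ∈ P, H z - ⟪z, q₀⟫ ≤ H (pos zstar) - ⟪pos zstar, q₀⟫) :=
  nonnegative_optimal_prices_general d ρ hmono K hKne hKc q₀ hdom H hH P hP pos hpos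
end
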